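/- Let G be a hamiltonian threshold graph and C a Hamilton cycle of G. If e = xy is a key edge of G not on C, and s, t are the successors of x and y respectively along C, then s and t are adjacent in G, and the cycle exchange replacing edges xs and yt by xy and st yields a Hamilton cycle of G containing e. -/

import Mathlib

open SimpleGraph Finset

/-- A threshold graph: there exist a nonnegative vertex weight function and a
nonnegative threshold `t` such that distinct vertices are adjacent iff the sum
of their weights exceeds `t`. -/
def SimpleGraph.IsThreshold {V : Type} (G : SimpleGraph V) : Prop :=
  ∃ (f : V → ℝ) (t : ℝ), (∀ v, 0 ≤ f v) ∧ 0 ≤ t ∧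
    ∀ u v : V, u ≠ v → (G.Adj u v ↔ f u + f v > t)

/-- Degree of a vertex (no decidability assumptions). -/
noncomputable def SimpleGraph.deg {V : Type} [Fintype V] (G : SimpleGraph V) (v : V) : ℕ :=
  Nat.card {u // G.Adj v u}

/-- `δ 0 = 0 < δ 1 < ⋯ < δ m` are exactly the degrees occurring in `G`;
the degree partition of `G` is `D_i = {v : deg v = δ i}`, `i = 0, …, m`. -/
structure SimpleGraph.DegreePartition {V : Type} [Fintype V] (G : SimpleGraph V)
    (m : ℕ) (δ : ℕ → ℕ) : Prop where
  zero : δ 0 = 0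
  mono : ∀ i j, i < j → j ≤ m → δ i < δ j
  cover : ∀ v : V, ∃ i ≤ m, G.deg v = δ i
  attained : ∀ i, 1 ≤ i → i ≤ m → ∃ v : V, G.deg v = δ i

/-- The degree set `D_i` of the degree partition. -/
noncomputable def SimpleGraph.Dset {V : Type} [Fintype V] (G : SimpleGraph V)
    (δ : ℕ → ℕ) (i : ℕ) : Finset V :=
  Finset.univ.filter (fun v => G.deg v = δ i)

/-- A key edge of a threshold graph with degree partition `D_0, …, D_m`: an edge
joining `D_k` and `D_{m+1-k}` for some `1 ≤ k ≤ ⌈m/2⌉`. -/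
def SimpleGraph.IsKeyEdge {V : Type} [Fintype V] (G : SimpleGraph V)
    (m : ℕ) (δ : ℕ → ℕ) (e : Sym2 V) : Prop :=
  e ∈ G.edgeSet ∧ ∃ x y k, e = s(x, y) ∧ 1 ≤ k ∧ k ≤ (m + 1) / 2 ∧
    G.deg x = δ k ∧ G.deg y = δ (m + 1 - k)

/-- The number of Hamilton cycles of `G`, counted as unordered spanning cycles
(a cycle is identified with its edge set). -/
noncomputable def SimpleGraph.hamCycleCount {V : Type} [Fintype V] [DecidableEq V]
    (G : SimpleGraph V) : ℕ :=
  Nat.card {s : Finset (Sym2 V) // ∃ (v : V) (w : G.Walk v v),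
    w.IsHamiltonianCycle ∧ w.edges.toFinset = s}

/-- The multiset of degrees of `G`. -/
noncomputable def SimpleGraph.degMultiset {V : Type} [Fintype V] (G : SimpleGraph V) :
    Multiset ℕ :=
  Finset.univ.val.map G.deg

/-- The degree sequence `n-1, n-1, n-2, …, ⌈n/2⌉, ⌈n/2⌉, …, 3, 2` of the graph `Gₙ`,
as a multiset: the values `2, …, n-1` together with an extra copy of `⌈n/2⌉` and of `n-1`. -/
def gnDegSeq (n : ℕ) : Multiset ℕ :=
  (Multiset.range (n - 2)).map (· + 2) + {(n + 1) / 2, n - 1}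

/-- An independent set in a graph. -/
def SimpleGraph.IsIndepSet₀ {V : Type} (G : SimpleGraph V) (S : Set V) : Prop :=
  ∀ u ∈ S, ∀ v ∈ S, u ≠ v → ¬ G.Adj u v

/-!
The weights of a threshold graph make neighbourhoods nested: for any `a, b`, one of
`N(a) - b` and `N(b) - a` contains the other, so a vertex of larger degree is adjacent to
every vertex (other than itself) that a vertex of smaller degree is adjacent to. Counting the
vertices above a degree level then shows that passing from `D_i` to `D_{i+1}` strictly lowers
the least degree of a neighbour, and by downward induction on `i` a vertex of `D_i` has
neighbours only in classes `D_j` with `i + j > m`.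

For a key edge `xy` with `x ∈ D_k`, `y ∈ D_{m+1-k}`, the successor `s` of `x` therefore has
degree at least that of `y`, so it is adjacent to the successor `t` of `y`. Writing the cycle
as `x → s ⋯ y → t ⋯ x`, the exchanged walk `x → y ⋯ s → t ⋯ x`, which runs the middle
segment backwards, is again a cycle through all vertices.
-/

theorem List.IsRotated.next_eq_of_getLast?_of_head? {α : Type} [DecidableEq α]
    {l l₁ l₂ : List α} {a b : α} (hrot : l ~r l₁ ++ l₂) (hl : l.Nodup)
    (ha : l₁.getLast? = some a) (hb : l₂.head? = some b) (h : a ∈ l) : l.next a h = b := by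
  obtain ⟨l₁, rfl⟩ := List.getLast?_eq_some_iff.1 ha
  obtain ⟨l₂, rfl⟩ := List.head?_eq_some_iff.1 hb
  have hrot' : l ~r a :: b :: (l₂ ++ l₁) :=
    hrot.trans (by simpa using List.isRotated_append (l := l₁) (l' := a :: b :: l₂))
  rw [List.isRotated_next_eq hrot' hl]
  exact List.next_cons_cons_eq _ a b _

namespace SimpleGraph

section Threshold

variable {V : Type} [Fintype V] {G : SimpleGraph V} [DecidableRel G.Adj]

theorem deg_eq_degree (v : V) : G.deg v = G.degree v := by
  rw [deg, ← card_neighborSet_eq_degree, ← Nat.card_eq_fintype_card]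
  rfl

theorem IsThreshold.erase_neighborFinset_subset_or [DecidableEq V] (hG : G.IsThreshold)
    (a b : V) :
    (G.neighborFinset a).erase b ⊆ (G.neighborFinset b).erase a ∨
      (G.neighborFinset b).erase a ⊆ (G.neighborFinset a).erase b := by
  obtain ⟨f, t, -, -, hadj⟩ := hG
  wlog hab : f a ≤ f b generalizing a b
  · exact (this b a (le_of_not_ge hab)).symm
  left
  intro z hz
  simp only [mem_erase, mem_neighborFinset] at hz ⊢
  obtain ⟨hzb, haz⟩ := hz
  have hfaz := (hadj a z haz.ne).1 haz
  exact ⟨haz.ne', (hadj b z (Ne.symm hzb)).2 (by linarith)⟩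

theorem IsThreshold.adj_of_degree_le (hG : G.IsThreshold) {a b c : V}
    (hd : G.degree b ≤ G.degree a) (hbc : G.Adj b c) (hac : a ≠ c) : G.Adj a c := by
  classical
  rcases hG.erase_neighborFinset_subset_or a b with h | h
  · by_contra hnac
    have hlt : #((G.neighborFinset a).erase b) < #((G.neighborFinset b).erase a) :=
      card_lt_card <| (ssubset_iff_of_subset h).2
        ⟨c, by simp [hbc, hac.symm], by simp [hnac]⟩
    simp only [card_erase_eq_ite, mem_neighborFinset, G.adj_comm b a,
      card_neighborFinset_eq_degree] at hlt
    split_ifs at hlt <;> omega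
  · simpa using mem_of_mem_erase (h (by simp [hbc, hac.symm]))

theorem IsThreshold.exists_adj_degree_lt (hG : G.IsThreshold) {u v w : V}
    (huv : G.degree u < G.degree v) (huw : G.Adj u w) :
    ∃ z, G.Adj v z ∧ G.degree z < G.degree w := by
  classical
  by_contra! h
  set U := univ.filter fun z => G.degree w ≤ G.degree z
  have hv : G.neighborFinset v ⊆ U.erase v := fun z hz => by
    rw [mem_neighborFinset] at hz
    simpa [U, hz.ne'] using h z hz
  have hu : U.erase u ⊆ G.neighborFinset u := fun z hz => by
    simp only [U, mem_erase, mem_filter, mem_univ, true_and] at hz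
    simpa using (hG.adj_of_degree_le hz.2 huw.symm hz.1).symm
  have hUvu : #(U.erase v) ≤ #(U.erase u) := by
    by_cases huU : u ∈ U
    · have hvU : v ∈ U := by simp only [U, mem_filter, mem_univ, true_and] at huU ⊢; omega
      rw [card_erase_of_mem huU, card_erase_of_mem hvU]
    · rw [erase_eq_of_notMem huU]
      exact card_erase_le
  have := card_le_card hv
  have := card_le_card hu
  simp only [card_neighborFinset_eq_degree] at *
  omega

end Threshold

section DegreePartition

variable {V : Type} [Fintype V] {G : SimpleGraph V} {m : ℕ} {δ : ℕ → ℕ}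

theorem DegreePartition.strictMonoOn (hdp : G.DegreePartition m δ) :
    StrictMonoOn δ (Set.Iic m) :=
  fun i _ j hj hij => hdp.mono i j hij hj

theorem DegreePartition.lt_add_of_adj (hG : G.IsThreshold) (hdp : G.DegreePartition m δ)
    {u w : V} {i j : ℕ} (huw : G.Adj u w) (hi : i ≤ m) (hj : j ≤ m)
    (hu : G.deg u = δ i) (hw : G.deg w = δ j) : m < i + j := by
  classical
  obtain ⟨k, hk⟩ : ∃ k, m - i = k := ⟨_, rfl⟩
  induction k generalizing i u w j with
  | zero =>
    have hj0 : j ≠ 0 := by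
      rintro rfl
      rw [hdp.zero, deg_eq_degree] at hw
      exact (G.degree_pos_iff_exists_adj w).2 ⟨u, huw.symm⟩ |>.ne' hw
    omega
  | succ k ih =>
    obtain ⟨v, hv⟩ := hdp.attained (i + 1) (by omega) (by omega)
    have huv : G.degree u < G.degree v := by
      rw [← deg_eq_degree, ← deg_eq_degree, hu, hv]
      exact hdp.mono i (i + 1) (by omega) (by omega)
    obtain ⟨z, hvz, hzw⟩ := hG.exists_adj_degree_lt huv huw
    obtain ⟨j', hj', hz⟩ := hdp.cover z
    have hj'j : j' < j := by
      rw [← deg_eq_degree, ← deg_eq_degree, hz, hw] at hzw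
      exact (hdp.strictMonoOn.lt_iff_lt hj' hj).1 hzw
    have := ih hvz (by omega) hj' hv hz (by omega)
    omega

theorem DegreePartition.adj_of_adj_of_add_eq (hG : G.IsThreshold)
    (hdp : G.DegreePartition m δ) {x y s t : V} {a b : ℕ} (ha : a ≤ m) (hb : b ≤ m)
    (hab : a + b = m + 1) (hx : G.deg x = δ a) (hy : G.deg y = δ b) (hxs : G.Adj x s)
    (hyt : G.Adj y t) (hst : s ≠ t) : G.Adj s t := by
  classical
  obtain ⟨i, hi, hs⟩ := hdp.cover s
  have hbi : b ≤ i := by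
    have := hdp.lt_add_of_adj hG hxs.symm hi ha hs hx
    omega
  have hys : G.degree y ≤ G.degree s := by
    rw [← deg_eq_degree, ← deg_eq_degree, hy, hs]
    exact hdp.strictMonoOn.monotoneOn hb hi hbi
  exact hG.adj_of_degree_le hys hyt hst

theorem IsKeyEdge.adj_of_adj (hG : G.IsThreshold) (hdp : G.DegreePartition m δ) {x y s t : V}
    (he : G.IsKeyEdge m δ s(x, y)) (hxs : G.Adj x s) (hyt : G.Adj y t) (hst : s ≠ t) :
    G.Adj s t := by
  obtain ⟨-, x', y', k, hxy, hk, hkm, hx', hy'⟩ := he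
  rcases Sym2.eq_iff.1 hxy with ⟨rfl, rfl⟩ | ⟨rfl, rfl⟩
  · exact hdp.adj_of_adj_of_add_eq hG (by omega) (by omega) (by omega) hx' hy' hxs hyt hst
  · exact hdp.adj_of_adj_of_add_eq hG (by omega) (by omega) (by omega) hy' hx' hxs hyt hst

end DegreePartition

end SimpleGraph

namespace SimpleGraph.Walk

variable {V : Type} {G : SimpleGraph V} {x s y t : V} {hxs : G.Adj x s} {hyt : G.Adj y t}
  {q : G.Walk s y} {r : G.Walk t x}

theorem getLast?_support {u v : V} (p : G.Walk u v) : p.support.getLast? = some v := by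
  rw [List.getLast?_eq_some_getLast p.support_ne_nil, getLast_support]

theorem head?_support {u v : V} (p : G.Walk u v) : p.support.head? = some u := by
  rw [List.head?_eq_some_head p.support_ne_nil, head_support]

theorem exists_rotate_eq_cons_append_cons [DecidableEq V] {v : V} (c : G.Walk v v)
    (hx : x ∈ c.support) (hy : y ∈ c.support.tail) (hxy : x ≠ y) :
    ∃ (s t : V) (hxs : G.Adj x s) (hyt : G.Adj y t) (q : G.Walk s y) (r : G.Walk t x),
      c.rotate x hx = cons hxs (q.append (cons hyt r)) := by
  have hy' : y ∈ (c.rotate x hx).support.tail := (c.support_rotate x hx).mem_iff.2 hy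
  generalize c.rotate x hx = c' at hy' ⊢
  cases c' with
  | nil => simp at hy'
  | cons hxs p =>
    rw [support_cons, List.tail_cons] at hy'
    obtain ⟨t, hyt, r, hr⟩ := exists_eq_cons_of_ne hxy.symm (p.dropUntil y hy')
    exact ⟨_, t, hxs, hyt, p.takeUntil y hy', r, by rw [← hr, take_spec]⟩

theorem IsCycle.exchange (hc : (cons hxs (q.append (cons hyt r))).IsCycle) (hxy : G.Adj x y)
    (hst : G.Adj s t) : (cons hxy (q.reverse.append (cons hst r))).IsCycle := by
  rw [cons_isCycle_iff] at hc ⊢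
  obtain ⟨hp, hxs_notMem⟩ := hc
  have hnd : (q.support ++ r.support).Nodup := by simpa [support_append] using hp.support_nodup
  have hdisj := List.disjoint_of_nodup_append hnd
  refine ⟨(isPath_def _).2 ?_, ?_⟩
  · simpa [support_append] using ((List.reverse_perm _).append_right _).nodup_iff.2 hnd
  · simp only [edges_append, edges_reverse, edges_cons, List.mem_append, List.mem_reverse,
      List.mem_cons]
    rintro (h | h | h)
    · exact hdisj (q.fst_mem_support_of_mem_edges h) r.end_mem_support
    · rcases Sym2.eq_iff.1 h with ⟨rfl, -⟩ | ⟨rfl, rfl⟩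
      · exact hxs.ne rfl
      · exact hxs_notMem (by simp [Sym2.eq_swap])
    · exact hdisj q.end_mem_support (r.snd_mem_support_of_mem_edges h)

theorem IsCycle.edges_toFinset_exchange [DecidableEq V]
    (hc : (cons hxs (q.append (cons hyt r))).IsCycle) (hxy : G.Adj x y) (hst : G.Adj s t) :
    (cons hxy (q.reverse.append (cons hst r))).edges.toFinset =
      ((cons hxs (q.append (cons hyt r))).edges.toFinset \ {s(x, s), s(y, t)}) ∪
        {s(x, y), s(s, t)} := by
  have hnd := hc.edges_nodup
  simp only [edges_cons, edges_append] at hnd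
  ext e
  simp only [edges_cons, edges_append, edges_reverse, List.toFinset_cons, List.toFinset_append,
    List.toFinset_reverse, Finset.mem_union, Finset.mem_sdiff, Finset.mem_insert,
    Finset.mem_singleton, List.mem_toFinset]
  grind

end SimpleGraph.Walk

theorem stmt19_general {V : Type} [Fintype V] [DecidableEq V] (G : SimpleGraph V)
    (m : ℕ) (δ : ℕ → ℕ) (hG : G.IsThreshold) (hdp : G.DegreePartition m δ)
    (v : V) (C : G.Walk v v) (hC : C.IsHamiltonianCycle)
    (x y : V) (he : G.IsKeyEdge m δ s(x, y))
    (hx : x ∈ C.support.tail) (hy : y ∈ C.support.tail) :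
    G.Adj (C.support.tail.next x hx) (C.support.tail.next y hy) ∧
    ∃ (w : V) (C' : G.Walk w w), C'.IsHamiltonianCycle ∧ s(x, y) ∈ C'.edges ∧
      C'.edges.toFinset =
        (C.edges.toFinset \ {s(x, C.support.tail.next x hx), s(y, C.support.tail.next y hy)}) ∪
          {s(x, y), s(C.support.tail.next x hx, C.support.tail.next y hy)} := by
  have hxy : G.Adj x y := he.1
  have hx' := List.mem_of_mem_tail hx
  obtain ⟨s, t, hxs, hyt, q, r, hrot⟩ := C.exists_rotate_eq_cons_append_cons hx' hy hxy.ne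
  have hc : (Walk.cons hxs (q.append (Walk.cons hyt r))).IsCycle := hrot ▸ hC.isCycle.rotate hx'
  have hL : C.support.tail ~r q.support ++ r.support := by
    simpa [hrot, Walk.support_append] using (C.support_rotate x hx').symm
  have hnd := hC.isCycle.support_nodup
  have hs : C.support.tail.next x hx = s := (hL.trans List.isRotated_append
    ).next_eq_of_getLast?_of_head? hnd r.getLast?_support q.head?_support hx
  have ht : C.support.tail.next y hy = t :=
    hL.next_eq_of_getLast?_of_head? hnd q.getLast?_support r.head?_support hy
  have hst : G.Adj s t := he.adj_of_adj hG hdp hxs hyt fun h =>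
    List.disjoint_of_nodup_append (hL.nodup_iff.1 hnd) q.start_mem_support
      (h ▸ r.start_mem_support)
  rw [hs, ht]
  refine ⟨hst, x, Walk.cons hxy (q.reverse.append (Walk.cons hst r)), ?_, by simp, ?_⟩
  · rw [Walk.isHamiltonianCycle_iff_isCycle_and_length_eq, ← hC.length_eq,
      ← C.length_rotate x hx', hrot]
    exact ⟨hc.exchange hxy hst, by simp [Walk.length_append]⟩
  · rw [hc.edges_toFinset_exchange hxy hst, ← hrot,
      List.toFinset_eq_of_perm _ _ (C.rotate_edges x hx').perm]

/-- if `C` is a Hamilton cycle of a hamiltonian threshold graph `G`, `xy` a key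
edge not on `C`, and `a, b` the successors of `x, y` along `C`, then `a` and `b` are adjacent
and the cycle exchange replacing `xa, yb` by `xy, ab` yields a Hamilton cycle through `xy`. -/
theorem stmt19 {V : Type} [Fintype V] [DecidableEq V] (G : SimpleGraph V)
    (m : ℕ) (δ : ℕ → ℕ) (hG : G.IsThreshold) (hdp : G.DegreePartition m δ)
    (v : V) (C : G.Walk v v) (hC : C.IsHamiltonianCycle)
    (x y : V) (he : G.IsKeyEdge m δ s(x, y)) (hnot : s(x, y) ∉ C.edges)
    (hx : x ∈ C.support.tail) (hy : y ∈ C.support.tail) :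
    G.Adj (C.support.tail.next x hx) (C.support.tail.next y hy) ∧
    ∃ (w : V) (C' : G.Walk w w), C'.IsHamiltonianCycle ∧ s(x, y) ∈ C'.edges ∧
      C'.edges.toFinset =
        (C.edges.toFinset \ {s(x, C.support.tail.next x hx), s(y, C.support.tail.next y hy)}) ∪
          {s(x, y), s(C.support.tail.next x hx, C.support.tail.next y hy)} :=
  stmt19_general G m δ hG hdp v C hC x y he hx hy
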